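/- arXiv:2311.15825 — 2 statements merged into one kernel-verified Lean document; each statement's English description precedes it below -/
import Mathlib

section
/- Let G be a discrete subgroup of O(n) × Isom(ℝ) acting freely on S^{n−1} × ℝ with compact quotient. Then the image of G under projection to Isom(ℝ) is an infinite discrete subgroup of Isom(ℝ), hence is infinite cyclic or infinite dihedral. -/
/-!
Every isometry of `ℝ` is `x ↦ x + c` or `x ↦ b - x`, according as its slope `f 1 - f 0` is `1`
or `-1`. The image `H` of `G` in `Isom(ℝ)` is discrete, since `hdisc` bounds the elements moving
`0` by at most `1`, and infinite, since a finite set of isometries cannot move every point into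
`[-D, D]`. Its translation amounts form a discrete, hence cyclic, subgroup `ℤ a` of `ℝ`, and
`a ≠ 0` because the translations have index at most `2` in the infinite group `H`. If `H` contains
no reflection it is generated by `x ↦ x + a`; otherwise, for a reflection `x ↦ b - x` in `H`,
`r i ↦ (x ↦ x + i a)`, `sr i ↦ (x ↦ b - (x + i a))` is an isomorphism `DihedralGroup 0 ≃* H`.
-/

open IsometryEquiv Set

namespace RealIsometry

theorem apply_eq_apply_zero_add_mul (f : ℝ ≃ᵢ ℝ) (x : ℝ) : f x = f 0 + (f 1 - f 0) * x := by
  have sq_sub (x y : ℝ) : (f x - f y) ^ 2 = (x - y) ^ 2 := by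
    rw [← sq_abs, ← Real.dist_eq, f.dist_eq, Real.dist_eq, sq_abs]
  nlinarith [sq_sub x 0, sq_sub x 1, sq_sub 1 0]

def slope : (ℝ ≃ᵢ ℝ) →* ℝ where
  toFun f := f 1 - f 0
  map_one' := by simp
  map_mul' f g := by
    simp only [mul_apply]
    rw [apply_eq_apply_zero_add_mul f (g 1), apply_eq_apply_zero_add_mul f (g 0)]
    ring

theorem slope_apply (f : ℝ ≃ᵢ ℝ) : slope f = f 1 - f 0 := rfl

theorem slope_eq_one_or_neg_one (f : ℝ ≃ᵢ ℝ) : slope f = 1 ∨ slope f = -1 := by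
  rw [← abs_eq zero_le_one, slope_apply, ← Real.dist_eq, f.dist_eq]
  norm_num [Real.dist_eq]

theorem eq_addRight_of_slope_eq_one {f : ℝ ≃ᵢ ℝ} (h : slope f = 1) : f = addRight (f 0) := by
  ext x
  rw [apply_eq_apply_zero_add_mul f x, ← slope_apply, h, addRight_apply]
  ring

theorem eq_subLeft_of_slope_eq_neg_one {f : ℝ ≃ᵢ ℝ} (h : slope f = -1) :
    f = subLeft (f 0) := by
  ext x
  rw [apply_eq_apply_zero_add_mul f x, ← slope_apply, h, subLeft_apply]
  ring

theorem slope_subLeft (b : ℝ) : slope (subLeft b) = -1 := by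
  simp [slope_apply]

theorem subLeft_mul_self (b : ℝ) : subLeft b * subLeft b = 1 := by
  ext x
  simp

def translation : Multiplicative ℝ →* (ℝ ≃ᵢ ℝ) where
  toFun c := addRight c.toAdd
  map_one' := by ext; simp
  map_mul' c d := by ext; simp only [toAdd_mul, addRight_apply, mul_apply]; ring

theorem addRight_zsmul (k : ℤ) (a : ℝ) : addRight (k • a) = addRight a ^ k :=
  map_zpow translation (.ofAdd a) k

def translationSubgroup (H : Subgroup (ℝ ≃ᵢ ℝ)) : AddSubgroup ℝ :=
  (H.comap translation).toAddSubgroup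

variable {H : Subgroup (ℝ ≃ᵢ ℝ)}

theorem mem_translationSubgroup {c : ℝ} : c ∈ translationSubgroup H ↔ addRight c ∈ H := Iff.rfl

theorem exists_translationSubgroup_eq_zmultiples (hdisc : {f ∈ H | |f 0| ≤ 1}.Finite) :
    ∃ a, translationSubgroup H = AddSubgroup.zmultiples a := by
  simp only [AddSubgroup.zmultiples_eq_closure]
  refine (translationSubgroup H).dense_or_cyclic.resolve_left fun hdense => ?_
  have hfin : ((translationSubgroup H : Set ℝ) ∩ Ioo 0 1).Finite := by
    have hinj : Function.Injective (addRight : ℝ → ℝ ≃ᵢ ℝ) := fun c d h => by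
      simpa using congr($h 0)
    refine (hdisc.preimage hinj.injOn).subset fun c ⟨hc, hc01⟩ => ⟨hc, ?_⟩
    simp [abs_of_pos hc01.1, hc01.2.le]
  obtain ⟨c, hc, hc01⟩ :=
    (hdense.sdiff_finite hfin).exists_mem_open isOpen_Ioo (nonempty_Ioo.2 one_pos)
  exact hc.2 ⟨hc.1, hc01⟩

theorem exists_mem_ne_one_slope_eq_one (hH : (H : Set (ℝ ≃ᵢ ℝ)).Infinite) :
    ∃ f ∈ H, f ≠ 1 ∧ slope f = 1 := by
  obtain ⟨f, hf, g, hg, hne, hfg⟩ := hH.exists_ne_map_eq_of_mapsTo (f := slope)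
    (t := {1, -1}) (fun f _ => slope_eq_one_or_neg_one f) (toFinite _)
  refine ⟨f * g⁻¹, mul_mem hf (inv_mem hg), fun h => hne (mul_inv_eq_one.1 h), ?_⟩
  rw [map_mul, hfg, ← map_mul, mul_inv_cancel, map_one]

theorem exists_eq_addRight_zsmul {a : ℝ} (hA : translationSubgroup H = .zmultiples a)
    {f : ℝ ≃ᵢ ℝ} (hf : f ∈ H) (h : slope f = 1) : ∃ k : ℤ, f = addRight (k • a) := by
  have hf0 : f 0 ∈ translationSubgroup H := by
    rwa [mem_translationSubgroup, ← eq_addRight_of_slope_eq_one h]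
  obtain ⟨k, hk⟩ := AddSubgroup.mem_zmultiples_iff.1 (hA ▸ hf0)
  exact ⟨k, hk ▸ eq_addRight_of_slope_eq_one h⟩

theorem isCyclic_of_forall_slope_eq_one {a : ℝ} (hA : translationSubgroup H = .zmultiples a)
    (h : ∀ f ∈ H, slope f = 1) : IsCyclic H := by
  have ha : addRight a ∈ H := mem_translationSubgroup.1 (hA ▸ AddSubgroup.mem_zmultiples a)
  refine ⟨⟨addRight a, ha⟩, fun ⟨f, hf⟩ => ?_⟩
  obtain ⟨k, rfl⟩ := exists_eq_addRight_zsmul hA hf (h f hf)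
  exact ⟨k, Subtype.ext (addRight_zsmul k a).symm⟩

def dihedralHom (a b : ℝ) : DihedralGroup 0 →* (ℝ ≃ᵢ ℝ) where
  toFun
    | .r i => addRight (i.cast * a)
    | .sr i => subLeft b * addRight (i.cast * a)
  map_one' := by ext; simp [DihedralGroup.one_def, -DihedralGroup.r_zero]
  map_mul' d e := by
    rcases d with i | i <;> rcases e with j | j <;> ext x <;>
      simp only [DihedralGroup.r_mul_r, DihedralGroup.r_mul_sr, DihedralGroup.sr_mul_r,
        DihedralGroup.sr_mul_sr, ZMod.cast_add (dvd_refl 0), ZMod.cast_sub (dvd_refl 0),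
        addRight_apply, subLeft_apply, mul_apply] <;> ring

@[simp] theorem dihedralHom_r (a b : ℝ) (i : ZMod 0) :
    dihedralHom a b (.r i) = addRight (i.cast * a) := rfl

@[simp] theorem dihedralHom_sr (a b : ℝ) (i : ZMod 0) :
    dihedralHom a b (.sr i) = subLeft b * addRight (i.cast * a) := rfl

theorem dihedralHom_injective {a : ℝ} (ha : a ≠ 0) (b : ℝ) :
    Function.Injective (dihedralHom a b) := by
  refine (injective_iff_map_eq_one _).2 fun d hd => ?_
  rcases d with i | i
  · have hi : (i.cast : ℝ) = 0 := (mul_eq_zero.1 (by simpa using congr($hd 0))).resolve_right ha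
    rw [ZMod.castHom_injective ℝ (a₁ := i) (a₂ := 0) (by simpa using hi), DihedralGroup.r_zero]
  · have h0 := congr($hd 0)
    have h1 := congr($hd 1)
    simp only [dihedralHom_sr, mul_apply, addRight_apply, subLeft_apply, coe_one, id_eq] at h0 h1
    linarith

theorem nonempty_mulEquiv_dihedralGroup {a b : ℝ} (hA : translationSubgroup H = .zmultiples a)
    (ha : a ≠ 0) (hb : subLeft b ∈ H) : Nonempty (H ≃* DihedralGroup 0) := by
  have htrans (i : ZMod 0) : addRight (i.cast * a) ∈ H := by
    rw [← mem_translationSubgroup, hA]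
    exact ⟨i.cast, by simp [zsmul_eq_mul, ZMod.intCast_cast]⟩
  have hmem (d : DihedralGroup 0) : dihedralHom a b d ∈ H := by
    rcases d with i | i
    · exact htrans i
    · exact mul_mem hb (htrans i)
  have hsurj (f : ℝ ≃ᵢ ℝ) (hf : f ∈ H) : ∃ d, dihedralHom a b d = f := by
    rcases slope_eq_one_or_neg_one f with h | h
    · obtain ⟨k, rfl⟩ := exists_eq_addRight_zsmul hA hf h
      exact ⟨.r (Int.cast k), by simp [zsmul_eq_mul]⟩
    · have hbf : slope (subLeft b * f) = 1 := by rw [map_mul, slope_subLeft, h]; norm_num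
      obtain ⟨k, hk⟩ := exists_eq_addRight_zsmul hA (mul_mem hb hf) hbf
      refine ⟨.sr (Int.cast k), ?_⟩
      rw [dihedralHom_sr, ZMod.cast_intCast', ← zsmul_eq_mul, ← hk, ← mul_assoc, subLeft_mul_self,
        one_mul]
  refine ⟨(MulEquiv.ofBijective ((dihedralHom a b).codRestrict H hmem) ⟨?_, ?_⟩).symm⟩
  · exact fun d e hde => dihedralHom_injective ha b congr($hde.1)
  · rintro ⟨f, hf⟩
    obtain ⟨d, hd⟩ := hsurj f hf
    exact ⟨d, Subtype.ext hd⟩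

theorem nonempty_mulEquiv_int_or_dihedralGroup (hdisc : {f ∈ H | |f 0| ≤ 1}.Finite)
    [Infinite H] : Nonempty (H ≃* Multiplicative ℤ) ∨ Nonempty (H ≃* DihedralGroup 0) := by
  obtain ⟨a, hA⟩ := exists_translationSubgroup_eq_zmultiples hdisc
  by_cases h : ∀ f ∈ H, slope f = 1
  · have := isCyclic_of_forall_slope_eq_one hA h
    exact .inl ⟨intCyclicMulEquiv.symm⟩
  push Not at h
  obtain ⟨r, hr, hr1⟩ := h
  have hb : subLeft (r 0) ∈ H :=
    eq_subLeft_of_slope_eq_neg_one ((slope_eq_one_or_neg_one r).resolve_left hr1) ▸ hr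
  obtain ⟨t, ht, ht1, hts⟩ := exists_mem_ne_one_slope_eq_one (infinite_coe_iff.1 ‹_›)
  obtain ⟨k, rfl⟩ := exists_eq_addRight_zsmul hA ht hts
  have ha : a ≠ 0 := by
    rintro rfl
    exact ht1 (by ext; simp)
  exact .inr (nonempty_mulEquiv_dihedralGroup hA ha hb)

theorem infinite_of_forall_exists_abs_apply_le {S : Set (ℝ ≃ᵢ ℝ)} {D : ℝ}
    (h : ∀ s, ∃ f ∈ S, |f s| ≤ D) : S.Infinite := by
  intro hfin
  obtain ⟨M, hM⟩ := (hfin.image fun f => |f 0|).bddAbove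
  set s := |M| + D + 1
  obtain ⟨f, hf, hfs⟩ := h s
  have hdisp : |f s - f 0| = |s| := by rw [← Real.dist_eq, f.dist_eq, Real.dist_eq, sub_zero]
  have hf0 : |f 0| ≤ M := hM (mem_image_of_mem _ hf)
  linarith [abs_sub (f s) (f 0), le_abs_self s, le_abs_self M]

end RealIsometry

open RealIsometry in
theorem stmt_8_general (n : ℕ)
    (G : Subgroup (Matrix.orthogonalGroup (Fin n) ℝ × (ℝ ≃ᵢ ℝ)))
    (hdisc : ∀ s : ℝ, {g : G | |(g : Matrix.orthogonalGroup (Fin n) ℝ × (ℝ ≃ᵢ ℝ)).2 s - s| ≤ 1}.Finite)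
    (hcocompact : ∃ D : ℝ, 0 < D ∧ ∀ s : ℝ, ∃ g ∈ G, |g.2 s| ≤ D) :
    Infinite (Subgroup.map (MonoidHom.snd (Matrix.orthogonalGroup (Fin n) ℝ) (ℝ ≃ᵢ ℝ)) G) ∧
      (Nonempty ((Subgroup.map (MonoidHom.snd (Matrix.orthogonalGroup (Fin n) ℝ) (ℝ ≃ᵢ ℝ)) G) ≃*
          Multiplicative ℤ) ∨
        Nonempty ((Subgroup.map (MonoidHom.snd (Matrix.orthogonalGroup (Fin n) ℝ) (ℝ ≃ᵢ ℝ)) G) ≃*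
          DihedralGroup 0)) := by
  set H := G.map (MonoidHom.snd (Matrix.orthogonalGroup (Fin n) ℝ) (ℝ ≃ᵢ ℝ))
  have hH : {f ∈ H | |f 0| ≤ 1}.Finite := by
    refine ((hdisc 0).image fun g : G => g.1.2).subset ?_
    rintro f ⟨⟨g, hg, rfl⟩, hf⟩
    exact ⟨⟨g, hg⟩, by simpa using hf, rfl⟩
  obtain ⟨D, -, hD⟩ := hcocompact
  have : Infinite H := infinite_coe_iff.2 <| infinite_of_forall_exists_abs_apply_le fun s =>
    let ⟨g, hg, hgs⟩ := hD s
    ⟨g.2, ⟨g, hg, rfl⟩, hgs⟩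
  exact ⟨this, nonempty_mulEquiv_int_or_dihedralGroup hH⟩

/-- Let `G` be a discrete subgroup of `O(n) × Isom(ℝ)` acting freely on
`S^{n-1} × ℝ` with compact quotient.  Then the image of `G` under the projection to
`Isom(ℝ)` is an infinite discrete subgroup of `Isom(ℝ)`, hence infinite cyclic or infinite
dihedral.  (`DihedralGroup 0` is the infinite dihedral group.)

Discreteness is encoded as proper discontinuity of the displacement (`hdisc`), and
cocompactness as bounded displacement of the line factor (`hcocompact`, using that the
sphere factor is compact). -/
theorem stmt_8 (n : ℕ) (hn : 2 ≤ n)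
    (G : Subgroup (Matrix.orthogonalGroup (Fin n) ℝ × (ℝ ≃ᵢ ℝ)))
    (hfree : ∀ g ∈ G, g ≠ 1 → ∀ (x : EuclideanSpace ℝ (Fin n)) (s : ℝ), ‖x‖ = 1 →
      ¬(Matrix.toEuclideanLin (g.1 : Matrix (Fin n) (Fin n) ℝ) x = x ∧ g.2 s = s))
    (hdisc : ∀ s : ℝ, {g : G | |(g : Matrix.orthogonalGroup (Fin n) ℝ × (ℝ ≃ᵢ ℝ)).2 s - s| ≤ 1}.Finite)
    (hcocompact : ∃ D : ℝ, 0 < D ∧ ∀ s : ℝ, ∃ g ∈ G, |g.2 s| ≤ D) :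
    Infinite (Subgroup.map (MonoidHom.snd (Matrix.orthogonalGroup (Fin n) ℝ) (ℝ ≃ᵢ ℝ)) G) ∧
      (Nonempty ((Subgroup.map (MonoidHom.snd (Matrix.orthogonalGroup (Fin n) ℝ) (ℝ ≃ᵢ ℝ)) G) ≃*
          Multiplicative ℤ) ∨
        Nonempty ((Subgroup.map (MonoidHom.snd (Matrix.orthogonalGroup (Fin n) ℝ) (ℝ ≃ᵢ ℝ)) G) ≃*
          DihedralGroup 0)) :=
  stmt_8_general n G hdisc hcocompact
end

section
/- Let Γ ≤ O(n) be finite acting freely on S^{n−1} and suppose a smooth connected noncompact n-manifold M admits an exhaustion by nested open sets each diffeomorphic to (S^{n−1}/Γ) × (0,1) with compatible gluings (i.e., M fibers as a tube over ℝ). Then M is diffeomorphic to (S^{n−1}/Γ) × ℝ. -/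
/-!
On the neck `U i` the function `p` is an affine function of the interval coordinate, so
`p ⁻¹' {t} ∩ U i` is a copy of the compact connected cross-section `N = S^{n-1}/Γ`. A whole
fibre `p ⁻¹' {t}` is compact, hence lies in a single neck, where it is connected; its nonempty
part in `U i` is relatively open and compact, hence closed, so it is all of it:
`U i = p ⁻¹' (a i, b i)`.
The range of the proper map `p` is therefore open and closed, i.e. all of `ℝ`, and every
interval `(-m-1, m+1)` lies under a single neck. The product charts over these intervals are
then corrected inductively: the chart over `(-m-2, m+2)` is composed with its transition to the
previous one, evaluated at the level clamped to `[-m, m]`. Consecutive charts then agree over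
`[-m, m]`, and together they define a homeomorphism `M ≃ₜ N × ℝ`.
-/

/-- The unit sphere `S^{n-1} ⊆ ℝⁿ`, as a subtype. -/
abbrev sphereN (n : ℕ) : Type := {v : EuclideanSpace ℝ (Fin n) // ‖v‖ = 1}

/-- The cross-section `S^{n-1}/Γ`. -/
abbrev sphereQuot (n : ℕ) (Γ : Subgroup (Matrix.orthogonalGroup (Fin n) ℝ)) : Type :=
  Quot fun x y : sphereN n =>
    ∃ γ ∈ Γ, Matrix.toEuclideanLin (γ : Matrix (Fin n) (Fin n) ℝ) x.1 = y.1

open Set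

lemma IsPreconnected.subset_of_isClosed_inter {X : Type*} [TopologicalSpace X] {s u : Set X}
    (hs : IsPreconnected s) (hu : IsOpen u) (hsu : IsClosed (s ∩ u)) (hne : (s ∩ u).Nonempty) :
    s ⊆ u := by
  intro x hx
  by_contra hxu
  obtain ⟨y, hys, hyu, hy⟩ := hs u (s ∩ u)ᶜ hu hsu.isOpen_compl
    (fun z hz ↦ or_iff_not_imp_left.2 fun hzu h ↦ hzu h.2) hne ⟨x, hx, fun h ↦ hxu h.2⟩
  exact hy ⟨hys, hyu⟩

lemma setOf_norm_eq_one {E : Type*} [NormedAddCommGroup E] :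
    {v : E | ‖v‖ = 1} = Metric.sphere 0 1 := by
  ext
  simp

lemma Icc_neg_natCast_subset_Ioo_of_le {k m : ℕ} (h : k ≤ m) :
    Icc (-(k : ℝ)) k ⊆ Ioo (-(m + 1 : ℝ)) (m + 1) := by
  have : (k : ℝ) ≤ m := by exact_mod_cast h
  exact Icc_subset_Ioo (by linarith) (by linarith)

lemma mem_Icc_of_mem_ball {t r : ℝ} (h : t ∈ Metric.ball 0 r) : t ∈ Icc (-r) r :=
  abs_le.mp (by simpa using (mem_ball_zero_iff.mp h).le)

noncomputable def affineHomeomorphIoo {a b : ℝ} (h : a < b) : Ioo (0 : ℝ) 1 ≃ₜ Ioo a b where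
  toFun s := ⟨a + (b - a) * s, by constructor <;> nlinarith [s.2.1, s.2.2]⟩
  invFun t := ⟨(t - a) / (b - a), div_pos (by linarith [t.2.1]) (by linarith),
    (div_lt_one (by linarith)).2 (by linarith [t.2.2])⟩
  left_inv s := Subtype.ext <| by field_simp [(sub_pos.2 h).ne']; ring
  right_inv t := Subtype.ext <| by field_simp [(sub_pos.2 h).ne']; ring
  continuous_toFun := by fun_prop
  continuous_invFun := by fun_prop

namespace Homeomorph

variable {X B C : Type*} [TopologicalSpace X] [TopologicalSpace B] [TopologicalSpace C]

lemma snd_symm_apply_of_snd_apply (g : X × B ≃ₜ X × B) (hg : ∀ z, (g z).2 = z.2)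
    (z : X × B) : (g.symm z).2 = z.2 := by
  conv_rhs => rw [← g.apply_symm_apply z]
  exact (hg _).symm

def prodPullback (g : X × B ≃ₜ X × B) (hg : ∀ z, (g z).2 = z.2) (c : C → B)
    (hc : Continuous c) : X × C ≃ₜ X × C where
  toFun z := ((g (z.1, c z.2)).1, z.2)
  invFun z := ((g.symm (z.1, c z.2)).1, z.2)
  left_inv z := by
    have h : ((g (z.1, c z.2)).1, c z.2) = g (z.1, c z.2) :=
      Prod.ext rfl (hg (z.1, c z.2)).symm
    simp only [h, symm_apply_apply]
  right_inv z := by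
    have h : ((g.symm (z.1, c z.2)).1, c z.2) = g.symm (z.1, c z.2) :=
      Prod.ext rfl (g.snd_symm_apply_of_snd_apply hg (z.1, c z.2)).symm
    simp only [h, apply_symm_apply]
  continuous_toFun := by fun_prop
  continuous_invFun := by fun_prop

end Homeomorph

structure TrivializationOver {M B : Type*} [TopologicalSpace M] [TopologicalSpace B]
    (p : M → B) (N : Type*) [TopologicalSpace N] (S : Set B) where
  toHomeomorph : p ⁻¹' S ≃ₜ N × S
  coe_snd : ∀ x, ((toHomeomorph x).2 : B) = p x

namespace TrivializationOver

variable {M B N : Type*} [TopologicalSpace M] [TopologicalSpace B] [TopologicalSpace N]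
  {p : M → B} {S T : Set B}

instance : CoeFun (TrivializationOver p N S) fun _ ↦ p ⁻¹' S → N × S :=
  ⟨fun φ ↦ φ.toHomeomorph⟩

variable (φ : TrivializationOver p N S)

lemma apply_eq (x : p ⁻¹' S) : φ x = ((φ x).1, ⟨p x, x.2⟩) :=
  Prod.ext rfl (Subtype.ext (φ.coe_snd x))

lemma coe_snd_symm (z : N × S) : p (φ.toHomeomorph.symm z) = z.2 := by
  rw [← φ.coe_snd, Homeomorph.apply_symm_apply]

lemma subset_range [Nonempty N] (φ : TrivializationOver p N S) : S ⊆ range p :=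
  fun t ht ↦ ⟨_, φ.coe_snd_symm (Classical.arbitrary N, ⟨t, ht⟩)⟩

def restrict (h : T ⊆ S) : TrivializationOver p N T where
  toHomeomorph :=
    { toFun x := ((φ (inclusion (preimage_mono h) x)).1,
        ⟨(φ (inclusion (preimage_mono h) x)).2, by rw [φ.coe_snd]; exact x.2⟩)
      invFun z := ⟨φ.toHomeomorph.symm (z.1, inclusion h z.2), by simp [coe_snd_symm]⟩
      left_inv x := Subtype.ext (by simp)
      right_inv z := by simp
      continuous_toFun := by fun_prop
      continuous_invFun := by fun_prop }
  coe_snd x := φ.coe_snd _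

lemma snd_symm_trans_apply (ψ : TrivializationOver p N S) (z : N × S) :
    (φ.toHomeomorph.symm.trans ψ.toHomeomorph z).2 = z.2 :=
  Subtype.ext <| by rw [Homeomorph.trans_apply, ψ.coe_snd, φ.coe_snd_symm]

variable {K S' : Set B}

def glue (ψ : TrivializationOver p N S') (hKS : K ⊆ S) (hKS' : K ⊆ S') (c : S → K)
    (hc : Continuous c) : TrivializationOver p N S where
  toHomeomorph := φ.toHomeomorph.trans
    (((φ.restrict hKS).toHomeomorph.symm.trans (ψ.restrict hKS').toHomeomorph).prodPullback
      ((φ.restrict hKS).snd_symm_trans_apply (ψ.restrict hKS')) c hc)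
  coe_snd := φ.coe_snd

lemma fst_glue_apply (ψ : TrivializationOver p N S') (hKS : K ⊆ S) (hKS' : K ⊆ S')
    {c : S → K} (hc : Continuous c) (hcK : ∀ t : S, ∀ ht : (t : B) ∈ K, c t = ⟨t, ht⟩)
    (x : p ⁻¹' S) (hx : p x ∈ K) :
    (φ.glue ψ hKS hKS' c hc x).1 = (ψ ⟨x, hKS' hx⟩).1 := by
  have hc_apply : c (φ x).2 = ⟨p x, hx⟩ := by
    rw [hcK _ (by rwa [φ.coe_snd])]
    exact Subtype.ext (φ.coe_snd x)
  have hφK : ((φ x).1, (⟨p x, hx⟩ : K)) = φ.restrict hKS ⟨x, hx⟩ :=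
    Prod.ext rfl (Subtype.ext (φ.coe_snd x).symm)
  change ((φ.restrict hKS).toHomeomorph.symm.trans (ψ.restrict hKS').toHomeomorph
    ((φ x).1, c (φ x).2)).1 = _
  rw [hc_apply, hφK, Homeomorph.trans_apply]
  simp [restrict]

lemma symm_apply_eq_iff {θ : N} {t : S} {x : p ⁻¹' S} :
    φ.toHomeomorph.symm (θ, t) = x ↔ (φ x).1 = θ ∧ p x = t := by
  rw [Homeomorph.symm_apply_eq, φ.apply_eq x, Prod.ext_iff, Subtype.ext_iff]
  exact ⟨fun h ↦ ⟨h.1.symm, h.2.symm⟩, fun h ↦ ⟨h.1.symm, h.2.symm⟩⟩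

end TrivializationOver

namespace TrivializationOver

variable {M N : Type*} [TopologicalSpace M] [TopologicalSpace N] {p : M → ℝ}
  (φ : ∀ m : ℕ, TrivializationOver p N (Ioo (-(m + 1 : ℝ)) (m + 1)))

noncomputable def glueSeq : ∀ m : ℕ, TrivializationOver p N (Ioo (-(m + 1 : ℝ)) (m + 1))
  | 0 => φ 0
  | m + 1 => (φ (m + 1)).glue (glueSeq m) (Icc_neg_natCast_subset_Ioo_of_le m.le_succ)
      (Icc_neg_natCast_subset_Ioo_of_le le_rfl)
      (fun t ↦ projIcc (-(m : ℝ)) m (neg_le_self m.cast_nonneg) t)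
      (continuous_projIcc.comp continuous_subtype_val)

lemma fst_glueSeq_eq_of_le {k m : ℕ} (hkm : k ≤ m) (x : p ⁻¹' Ioo (-(m + 1 : ℝ)) (m + 1))
    (hx : p x ∈ Icc (-(k : ℝ)) k) :
    (glueSeq φ m x).1 = (glueSeq φ k ⟨x, Icc_neg_natCast_subset_Ioo_of_le le_rfl hx⟩).1 := by
  induction m, hkm using Nat.le_induction with
  | base => rfl
  | succ m hkm ih =>
    have hxm : p x ∈ Icc (-(m : ℝ)) m :=
      Icc_subset_Icc (by simpa using hkm) (by simpa using hkm) hx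
    rw [← ih ⟨x, Icc_neg_natCast_subset_Ioo_of_le le_rfl hxm⟩ hx]
    exact fst_glue_apply _ _ _ _ _ (fun t ht ↦ projIcc_of_mem _ ht) x hxm

noncomputable def fiberCoord (x : M) : N :=
  (glueSeq φ ⌈|p x|⌉₊
    ⟨x, Icc_neg_natCast_subset_Ioo_of_le le_rfl (abs_le.mp (Nat.le_ceil _))⟩).1

lemma fiberCoord_eq {m : ℕ} (x : p ⁻¹' Ioo (-(m + 1 : ℝ)) (m + 1))
    (hx : p x ∈ Icc (-(m : ℝ)) m) : fiberCoord φ x = (glueSeq φ m x).1 :=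
  (fst_glueSeq_eq_of_le φ (Nat.ceil_le.mpr (abs_le.mpr hx)) x (abs_le.mp (Nat.le_ceil _))).symm

lemma continuous_fiberCoord (hp : Continuous p) : Continuous (fiberCoord φ) := by
  refine continuous_of_continuousOn_iUnion_of_isOpen (s := fun m : ℕ ↦ p ⁻¹' Metric.ball 0 m)
    (fun m ↦ ?_) (fun m ↦ Metric.isOpen_ball.preimage hp)
    (by rw [← preimage_iUnion, Metric.iUnion_ball_nat, preimage_univ])
  have hsub : p ⁻¹' Metric.ball 0 m ⊆ p ⁻¹' Ioo (-(m + 1 : ℝ)) (m + 1) :=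
    fun x hx ↦ Icc_neg_natCast_subset_Ioo_of_le le_rfl (mem_Icc_of_mem_ball hx)
  rw [continuousOn_iff_continuous_domRestrict]
  have h : (p ⁻¹' Metric.ball 0 m).domRestrict (fiberCoord φ) =
      fun x ↦ (glueSeq φ m (inclusion hsub x)).1 :=
    funext fun x ↦ fiberCoord_eq φ (inclusion hsub x) (mem_Icc_of_mem_ball x.2)
  rw [h]
  fun_prop

lemma fiberCoord_glueSeq_symm {m : ℕ} (θ : N) (t : Ioo (-(m + 1 : ℝ)) (m + 1))
    (ht : (t : ℝ) ∈ Icc (-(m : ℝ)) m) :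
    fiberCoord φ ((glueSeq φ m).toHomeomorph.symm (θ, t)) = θ := by
  obtain ⟨h1, h2⟩ := ((glueSeq φ m).symm_apply_eq_iff).1 rfl
  rw [fiberCoord_eq φ _ (h2 ▸ ht), h1]

noncomputable def equivProd : M ≃ N × ℝ where
  toFun x := (fiberCoord φ x, p x)
  invFun z := (glueSeq φ ⌈|z.2|⌉₊).toHomeomorph.symm
    (z.1, ⟨z.2, Icc_neg_natCast_subset_Ioo_of_le le_rfl (abs_le.mp (Nat.le_ceil _))⟩)
  left_inv _ := congrArg Subtype.val (((glueSeq φ _).symm_apply_eq_iff).2 ⟨rfl, rfl⟩)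
  right_inv _ := Prod.ext (fiberCoord_glueSeq_symm φ _ _ (abs_le.mp (Nat.le_ceil _)))
    ((glueSeq φ _).coe_snd_symm _)

lemma equivProd_symm_eq {m : ℕ} (z : N × ℝ) (hz : z.2 ∈ Icc (-(m : ℝ)) m) :
    (equivProd φ).symm z =
      (glueSeq φ m).toHomeomorph.symm
        (z.1, ⟨z.2, Icc_neg_natCast_subset_Ioo_of_le le_rfl hz⟩) := by
  rw [Equiv.symm_apply_eq]
  change z = (fiberCoord φ _, p _)
  rw [fiberCoord_glueSeq_symm φ _ _ hz, (glueSeq φ m).coe_snd_symm]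

noncomputable def homeomorphProd (hp : Continuous p) : M ≃ₜ N × ℝ where
  toEquiv := equivProd φ
  continuous_toFun := (continuous_fiberCoord φ hp).prodMk hp
  continuous_invFun := by
    refine continuous_of_continuousOn_iUnion_of_isOpen
      (s := fun m : ℕ ↦ Prod.snd ⁻¹' Metric.ball 0 m) (fun m ↦ ?_)
      (fun m ↦ Metric.isOpen_ball.preimage continuous_snd)
      (by rw [← preimage_iUnion, Metric.iUnion_ball_nat, preimage_univ])
    rw [continuousOn_iff_continuous_domRestrict, Equiv.invFun_as_coe]
    have h : (Prod.snd ⁻¹' Metric.ball 0 m).domRestrict (equivProd φ).symm =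
        fun z ↦ ((glueSeq φ m).toHomeomorph.symm
          (z.1.1, ⟨z.1.2, Icc_neg_natCast_subset_Ioo_of_le le_rfl
            (mem_Icc_of_mem_ball z.2)⟩) : M) :=
      funext fun z ↦ equivProd_symm_eq φ z.1 (mem_Icc_of_mem_ball z.2)
    rw [h]
    fun_prop

end TrivializationOver

section Necks

variable {M N B : Type*} [TopologicalSpace M] [TopologicalSpace N] [TopologicalSpace B]
  {p : M → B}

lemma preimage_singleton_inter_eq_range {U : Set M} {S : Set B} (e : U ≃ₜ N × S)
    (he : ∀ x, ((e x).2 : B) = p x) {t : B} (ht : t ∈ S) :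
    p ⁻¹' {t} ∩ U = range fun θ ↦ (e.symm (θ, ⟨t, ht⟩) : M) := by
  ext x
  constructor
  · rintro ⟨hxt, hxU⟩
    have h : e.symm ((e ⟨x, hxU⟩).1, ⟨t, ht⟩) = ⟨x, hxU⟩ :=
      e.symm_apply_eq.2 (Prod.ext rfl (Subtype.ext ((he ⟨x, hxU⟩).trans hxt).symm))
    exact ⟨_, congrArg Subtype.val h⟩
  · rintro ⟨θ, rfl⟩
    refine ⟨?_, Subtype.coe_prop _⟩
    rw [mem_preimage, mem_singleton_iff, ← he, e.apply_symm_apply]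

theorem neck_eq_preimage [T2Space M] [CompactSpace N] [ConnectedSpace N] {U : ℕ → Set M}
    (hmono : Monotone U) (hopen : ∀ i, IsOpen (U i)) (hcover : ⋃ i, U i = univ)
    (hfiber : ∀ t, IsCompact (p ⁻¹' {t})) {S : ℕ → Set B} (e : ∀ i, U i ≃ₜ N × S i)
    (he : ∀ i x, ((e i x).2 : B) = p x) (i : ℕ) : U i = p ⁻¹' S i := by
  refine Subset.antisymm (fun x hx ↦ ?_) (fun x hx ↦ ?_)
  · rw [mem_preimage, ← he i ⟨x, hx⟩]
    exact Subtype.coe_prop _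
  obtain ⟨j, hj⟩ := (hfiber (p x)).elim_directed_cover U hopen (hcover ▸ subset_univ _)
    hmono.directed_le
  have hFi := preimage_singleton_inter_eq_range (e i) (he i) hx
  obtain ⟨y, hyF, -⟩ : (p ⁻¹' {p x} ∩ U i).Nonempty := hFi ▸ range_nonempty _
  have hxj : p x ∈ S j := by
    rw [← hyF, ← he j ⟨y, hj hyF⟩]
    exact Subtype.coe_prop _
  have hF : IsPreconnected (p ⁻¹' {p x}) := by
    rw [← inter_eq_left.2 hj, preimage_singleton_inter_eq_range (e j) (he j) hxj]
    exact (isConnected_range (by fun_prop)).isPreconnected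
  refine hF.subset_of_isClosed_inter (hopen i) ?_ (hFi ▸ range_nonempty _) rfl
  rw [hFi]
  exact (isCompact_range (by fun_prop)).isClosed

end Necks

theorem nonempty_homeomorph_prod_real_of_necks {M N : Type*} [TopologicalSpace M]
    [TopologicalSpace N] [T2Space M] [Nonempty M] [CompactSpace N] [ConnectedSpace N]
    {U : ℕ → Set M} (hmono : Monotone U) (hopen : ∀ i, IsOpen (U i))
    (hcover : ⋃ i, U i = univ) {p : M → ℝ} (hp : Continuous p)
    (hproper : ∀ K : Set ℝ, IsCompact K → IsCompact (p ⁻¹' K)) {a b : ℕ → ℝ}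
    (e : ∀ i, U i ≃ₜ N × Ioo (a i) (b i)) (he : ∀ i x, ((e i x).2 : ℝ) = p x) :
    Nonempty (M ≃ₜ N × ℝ) := by
  have hU i := neck_eq_preimage hmono hopen hcover (fun t ↦ hproper _ isCompact_singleton) e
    he i
  let φ i : TrivializationOver p N (Ioo (a i) (b i)) :=
    ⟨(Homeomorph.setCongr (hU i).symm).trans (e i), fun x ↦ he i _⟩
  have hrange : range p = ⋃ i, Ioo (a i) (b i) := by
    refine Subset.antisymm ?_ (iUnion_subset fun i ↦ (φ i).subset_range)
    rintro _ ⟨x, rfl⟩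
    obtain ⟨i, hi⟩ := mem_iUnion.1 (hcover.symm ▸ mem_univ x : x ∈ ⋃ i, U i)
    exact mem_iUnion.2 ⟨i, (hU i).subset hi⟩
  have hrange_univ : range p = univ := by
    refine IsClopen.eq_univ ⟨?_, ?_⟩ (range_nonempty p)
    · have hp_proper : IsProperMap p :=
        isProperMap_iff_isCompact_preimage.2 ⟨hp, fun K hK ↦ hproper K hK⟩
      exact hp_proper.isClosedMap.isClosed_range
    · exact hrange ▸ isOpen_iUnion fun i ↦ isOpen_Ioo
  have hball (m : ℕ) : ∃ i, Ioo (-(m + 1 : ℝ)) (m + 1) ⊆ Ioo (a i) (b i) := by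
    obtain ⟨i, hi⟩ := (hproper _ isCompact_Icc).elim_directed_cover U hopen
      (hcover ▸ subset_univ _) hmono.directed_le
    refine ⟨i, fun t ht ↦ ?_⟩
    obtain ⟨x, rfl⟩ := hrange_univ.symm ▸ mem_univ t
    exact (hU i).subset (hi (Ioo_subset_Icc_self ht))
  choose i hi using hball
  exact ⟨TrivializationOver.homeomorphProd (fun m ↦ (φ (i m)).restrict (hi m)) hp⟩

instance (n : ℕ) : CompactSpace (sphereN n) := by
  have h : IsCompact {v : EuclideanSpace ℝ (Fin n) | ‖v‖ = 1} := by
    rw [setOf_norm_eq_one]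
    exact isCompact_sphere 0 1
  exact isCompact_iff_compactSpace.mp h

lemma connectedSpace_sphereQuot {n : ℕ} (hn : 2 ≤ n)
    (Γ : Subgroup (Matrix.orthogonalGroup (Fin n) ℝ)) : ConnectedSpace (sphereQuot n Γ) := by
  have hrank : 1 < Module.rank ℝ (EuclideanSpace ℝ (Fin n)) := by
    rw [← Module.finrank_eq_rank, finrank_euclideanSpace_fin]
    exact_mod_cast hn
  have h : IsConnected {v : EuclideanSpace ℝ (Fin n) | ‖v‖ = 1} := by
    rw [setOf_norm_eq_one]
    exact isConnected_sphere hrank 0 zero_le_one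
  have : ConnectedSpace (sphereN n) := isConnected_iff_connectedSpace.mp h
  exact Quot.mk_surjective.connectedSpace continuous_quot_mk

theorem stmt_16_general (n : ℕ) (hn : 2 ≤ n)
    (Γ : Subgroup (Matrix.orthogonalGroup (Fin n) ℝ))
    (M : Type*) [TopologicalSpace M] [T2Space M] [ConnectedSpace M]
    (U : ℕ → Set M)
    (hopen : ∀ i, IsOpen (U i))
    (hnested : ∀ i, closure (U i) ⊆ U (i + 1))
    (hcover : ⋃ i, U i = Set.univ)
    (e : ∀ i, (U i) ≃ₜ (sphereQuot n Γ × Set.Ioo (0:ℝ) 1))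
    -- compatibility of the gluings: `M` fibers as a tube over `ℝ`
    (p : M → ℝ) (hp : Continuous p) (hproper : ∀ K : Set ℝ, IsCompact K → IsCompact (p ⁻¹' K))
    (hfib : ∀ i, ∃ a b : ℝ, a < b ∧ ∀ x : U i, p x = a + (b - a) * ((e i x).2 : ℝ)) :
    Nonempty (M ≃ₜ (sphereQuot n Γ × ℝ)) := by
  have := connectedSpace_sphereQuot hn Γ
  choose a b hab hfib using hfib
  exact nonempty_homeomorph_prod_real_of_necks
    (monotone_nat_of_le_succ fun i ↦ subset_closure.trans (hnested i)) hopen hcover hp hproper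
    (fun i ↦ (e i).trans ((Homeomorph.refl _).prodCongr (affineHomeomorphIoo (hab i))))
    (fun i x ↦ (hfib i x).symm)

/-- Let `Γ ≤ O(n)` be finite acting freely on `S^{n-1}`, and suppose a
connected noncompact `n`-manifold `M` admits an exhaustion by nested open sets, each
homeomorphic to a neck `(S^{n-1}/Γ) × (0,1)`, with compatible gluings (`M` fibers as a
tube over `ℝ`: a proper map `p : M → ℝ` restricting on each neck to the projection to the
interval factor).  Then `M` is homeomorphic (diffeomorphic) to `(S^{n-1}/Γ) × ℝ`. -/
theorem stmt_16 (n : ℕ) (hn : 2 ≤ n)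
    (Γ : Subgroup (Matrix.orthogonalGroup (Fin n) ℝ)) [Finite Γ]
    (hfree : ∀ γ ∈ Γ, γ ≠ 1 → ∀ v : EuclideanSpace ℝ (Fin n), ‖v‖ = 1 →
      Matrix.toEuclideanLin (γ : Matrix (Fin n) (Fin n) ℝ) v ≠ v)
    (M : Type*) [TopologicalSpace M] [T2Space M] [ConnectedSpace M] [NoncompactSpace M]
    (U : ℕ → Set M)
    (hopen : ∀ i, IsOpen (U i))
    (hnested : ∀ i, closure (U i) ⊆ U (i + 1))
    (hcover : ⋃ i, U i = Set.univ)
    (e : ∀ i, (U i) ≃ₜ (sphereQuot n Γ × Set.Ioo (0:ℝ) 1))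
    -- compatibility of the gluings: `M` fibers as a tube over `ℝ`
    (p : M → ℝ) (hp : Continuous p) (hproper : ∀ K : Set ℝ, IsCompact K → IsCompact (p ⁻¹' K))
    (hfib : ∀ i, ∃ a b : ℝ, a < b ∧ ∀ x : U i, p x = a + (b - a) * ((e i x).2 : ℝ)) :
    Nonempty (M ≃ₜ (sphereQuot n Γ × ℝ)) :=
  stmt_16_general n hn Γ M U hopen hnested hcover e p hp hproper hfib
end
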